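/- If two finite-horizon MDPs share reward function r̃ bounded by R_max and their transition kernels differ by at most ε in total variation uniformly over state-action pairs, then for any policy π and starting state-action pair, the return-based advantage functions A^π_P(s,a) = E_{P,π}[Σ_{j=t}^{K−1} r̃(s_j, a_j)] satisfy |A^π_{P̂}(s,a) − A^π_P(s,a)| ≤ (K² − K)·R_max·ε. -/
import Mathlib


open Finset

/-- State-action trajectory distribution under policy π and kernel P, started from a
fixed state-action pair. -/
def traj {S A : Type*} [Fintype S] [Fintype A] [DecidableEq S] [DecidableEq A]
    (π : S → A → ℝ) (P : S → A → S → ℝ) (init : S × A) : ℕ → S × A → ℝ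
  | 0 => fun x => if x = init then 1 else 0
  | (t + 1) => fun x => ∑ y : S × A, traj π P init t y * P y.1 y.2 x.1 * π x.1 x.2

lemma traj_nonneg {S A : Type*} [Fintype S] [Fintype A] [DecidableEq S] [DecidableEq A]
    (π : S → A → ℝ) (P : S → A → S → ℝ) (init : S × A)
    (hπ : ∀ s a, 0 ≤ π s a) (hP : ∀ s a s', 0 ≤ P s a s') :
    ∀ t x, 0 ≤ traj π P init t x := by
  intro t
  induction t with
  | zero => intro x; simp [traj]; split <;> norm_num
  | succ t ih =>
    intro x
    apply Finset.sum_nonneg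
    intro y _
    exact mul_nonneg (mul_nonneg (ih y) (hP _ _ _)) (hπ _ _)

lemma sum_kernel_pol {S A : Type*} [Fintype S] [Fintype A]
    (π : S → A → ℝ) (Q : S → ℝ) (hπ_sum : ∀ s, ∑ a, π s a = 1) :
    ∑ x : S × A, Q x.1 * π x.1 x.2 = ∑ s : S, Q s := by
  rw [Fintype.sum_prod_type]
  apply Finset.sum_congr rfl
  intro s _
  show ∑ a : A, Q s * π s a = Q s
  rw [← Finset.mul_sum, hπ_sum, mul_one]

lemma traj_sum {S A : Type*} [Fintype S] [Fintype A] [DecidableEq S] [DecidableEq A]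
    (π : S → A → ℝ) (P : S → A → S → ℝ) (init : S × A)
    (hπ_sum : ∀ s, ∑ a, π s a = 1) (hP_sum : ∀ s a, ∑ s', P s a s' = 1) :
    ∀ t, ∑ x : S × A, traj π P init t x = 1 := by
  intro t
  induction t with
  | zero => simp [traj]
  | succ t ih =>
    show ∑ x : S × A, ∑ y : S × A, traj π P init t y * P y.1 y.2 x.1 * π x.1 x.2 = 1
    rw [Finset.sum_comm]
    have key : ∀ y : S × A, ∑ x : S × A, traj π P init t y * P y.1 y.2 x.1 * π x.1 x.2
        = traj π P init t y := by
      intro y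
      have := sum_kernel_pol π (fun s => traj π P init t y * P y.1 y.2 s) hπ_sum
      simp only [mul_assoc] at this ⊢
      rw [this, ← Finset.mul_sum, hP_sum, mul_one]
    simp_rw [key, ih]

lemma traj_l1 {S A : Type*} [Fintype S] [Fintype A] [DecidableEq S] [DecidableEq A]
    (π : S → A → ℝ) (P Phat : S → A → S → ℝ) (init : S × A) (ε : ℝ)
    (hπ_nonneg : ∀ s a, 0 ≤ π s a) (hπ_sum : ∀ s, ∑ a, π s a = 1)
    (hPhat_nonneg : ∀ s a s', 0 ≤ Phat s a s')
    (hPhat_sum : ∀ s a, ∑ s', Phat s a s' = 1)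
    (hTV : ∀ s a, ∑ s', |Phat s a s' - P s a s'| ≤ 2 * ε)
    (htrajP_nonneg : ∀ t x, 0 ≤ traj π P init t x)
    (htrajP_sum : ∀ t, ∑ x : S × A, traj π P init t x = 1) :
    ∀ t, ∑ x : S × A, |traj π Phat init t x - traj π P init t x| ≤ 2 * t * ε := by
  intro t
  induction t with
  | zero => simp [traj]
  | succ t ih =>
    have hε : 0 ≤ ε := by
      have h0 := hTV init.1 init.2
      have : (0:ℝ) ≤ ∑ s', |Phat init.1 init.2 s' - P init.1 init.2 s'| :=
        Finset.sum_nonneg fun _ _ => abs_nonneg _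
      linarith
    have hstep : ∀ x : S × A,
        traj π Phat init (t+1) x - traj π P init (t+1) x
        = ∑ y : S × A, ((traj π Phat init t y - traj π P init t y) * Phat y.1 y.2 x.1
            + traj π P init t y * (Phat y.1 y.2 x.1 - P y.1 y.2 x.1)) * π x.1 x.2 := by
      intro x
      show (∑ y : S × A, traj π Phat init t y * Phat y.1 y.2 x.1 * π x.1 x.2)
          - (∑ y : S × A, traj π P init t y * P y.1 y.2 x.1 * π x.1 x.2) = _
      rw [← Finset.sum_sub_distrib]
      exact Finset.sum_congr rfl fun y _ => by ring
    have hbound : ∀ x : S × A, |traj π Phat init (t+1) x - traj π P init (t+1) x|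
        ≤ ∑ y : S × A,
            (|traj π Phat init t y - traj π P init t y| * Phat y.1 y.2 x.1
              + traj π P init t y * |Phat y.1 y.2 x.1 - P y.1 y.2 x.1|) * π x.1 x.2 := by
      intro x
      rw [hstep x]
      refine le_trans (Finset.abs_sum_le_sum_abs _ _) (Finset.sum_le_sum ?_)
      intro y _
      rw [abs_mul, abs_of_nonneg (hπ_nonneg _ _)]
      apply mul_le_mul_of_nonneg_right _ (hπ_nonneg _ _)
      refine le_trans (abs_add_le _ _) ?_
      rw [abs_mul, abs_mul, abs_of_nonneg (hPhat_nonneg _ _ _),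
        abs_of_nonneg (htrajP_nonneg _ _)]
    calc ∑ x : S × A, |traj π Phat init (t+1) x - traj π P init (t+1) x|
        ≤ ∑ x : S × A, ∑ y : S × A,
            (|traj π Phat init t y - traj π P init t y| * Phat y.1 y.2 x.1
              + traj π P init t y * |Phat y.1 y.2 x.1 - P y.1 y.2 x.1|) * π x.1 x.2 :=
          Finset.sum_le_sum fun x _ => hbound x
      _ = ∑ y : S × A,
            (|traj π Phat init t y - traj π P init t y|
              + traj π P init t y * ∑ s', |Phat y.1 y.2 s' - P y.1 y.2 s'|) := by
          rw [Finset.sum_comm]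
          apply Finset.sum_congr rfl
          intro y _
          have h1 : ∑ x : S × A,
              (|traj π Phat init t y - traj π P init t y| * Phat y.1 y.2 x.1
                + traj π P init t y * |Phat y.1 y.2 x.1 - P y.1 y.2 x.1|) * π x.1 x.2
              = ∑ s' : S, (|traj π Phat init t y - traj π P init t y| * Phat y.1 y.2 s'
                + traj π P init t y * |Phat y.1 y.2 s' - P y.1 y.2 s'|) :=
            sum_kernel_pol π (fun s' => |traj π Phat init t y - traj π P init t y| * Phat y.1 y.2 s'
                + traj π P init t y * |Phat y.1 y.2 s' - P y.1 y.2 s'|) hπ_sum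
          rw [h1, Finset.sum_add_distrib, ← Finset.mul_sum, ← Finset.mul_sum,
            hPhat_sum, mul_one]
      _ ≤ ∑ y : S × A,
            (|traj π Phat init t y - traj π P init t y| + traj π P init t y * (2 * ε)) := by
          apply Finset.sum_le_sum
          intro y _
          have := mul_le_mul_of_nonneg_left (hTV y.1 y.2) (htrajP_nonneg t y)
          linarith
      _ = (∑ y : S × A, |traj π Phat init t y - traj π P init t y|)
            + (∑ y : S × A, traj π P init t y) * (2 * ε) := by
          rw [Finset.sum_add_distrib, Finset.sum_mul]
      _ ≤ 2 * t * ε + 1 * (2 * ε) := by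
          rw [htrajP_sum t]
          linarith [ih]
      _ = 2 * (t + 1 : ℕ) * ε := by push_cast; ring

lemma sum_range_two_mul (K : ℕ) : ∑ t ∈ Finset.range K, (2 * (t : ℝ)) = (K : ℝ) ^ 2 - K := by
  induction K with
  | zero => simp
  | succ n ih =>
    rw [Finset.sum_range_succ, ih]
    push_cast
    ring

/-- Generalized Simulation Lemma: if the transition kernels of two finite-horizon MDPs
sharing a reward bounded by R_max differ by at most ε in total variation uniformly,
then the return-based advantage functions differ by at most (K² − K)·R_max·ε. -/
theorem stmt15 {S A : Type*} [Fintype S] [Fintype A] [DecidableEq S] [DecidableEq A]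
    (π : S → A → ℝ) (P Phat : S → A → S → ℝ) (r : S × A → ℝ) (Rmax ε : ℝ) (K : ℕ)
    (hπ_nonneg : ∀ s a, 0 ≤ π s a) (hπ_sum : ∀ s, ∑ a, π s a = 1)
    (hP_nonneg : ∀ s a s', 0 ≤ P s a s') (hP_sum : ∀ s a, ∑ s', P s a s' = 1)
    (hPhat_nonneg : ∀ s a s', 0 ≤ Phat s a s')
    (hPhat_sum : ∀ s a, ∑ s', Phat s a s' = 1)
    (hr : ∀ x, |r x| ≤ Rmax)
    (hTV : ∀ s a, (1 / 2) * ∑ s', |Phat s a s' - P s a s'| ≤ ε) :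
    ∀ init : S × A,
      |(∑ t ∈ Finset.range K, ∑ x : S × A, traj π Phat init t x * r x) -
        (∑ t ∈ Finset.range K, ∑ x : S × A, traj π P init t x * r x)|
      ≤ ((K : ℝ) ^ 2 - K) * Rmax * ε := by
  intro init
  have hRmax : 0 ≤ Rmax := le_trans (abs_nonneg _) (hr init)
  have hTV' : ∀ s a, ∑ s', |Phat s a s' - P s a s'| ≤ 2 * ε := by
    intro s a
    have := hTV s a
    linarith
  have hl1 := traj_l1 π P Phat init ε hπ_nonneg hπ_sum hPhat_nonneg hPhat_sum hTV'
    (traj_nonneg π P init hπ_nonneg hP_nonneg) (traj_sum π P init hπ_sum hP_sum)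
  have hterm : ∀ t : ℕ,
      |(∑ x : S × A, traj π Phat init t x * r x) - ∑ x : S × A, traj π P init t x * r x|
      ≤ Rmax * (2 * t * ε) := by
    intro t
    rw [← Finset.sum_sub_distrib]
    calc |∑ x : S × A, (traj π Phat init t x * r x - traj π P init t x * r x)|
        ≤ ∑ x : S × A, |traj π Phat init t x - traj π P init t x| * Rmax := by
          refine le_trans (Finset.abs_sum_le_sum_abs _ _) (Finset.sum_le_sum ?_)
          intro x _
          rw [← sub_mul, abs_mul]
          exact mul_le_mul_of_nonneg_left (hr x) (abs_nonneg _)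
      _ = (∑ x : S × A, |traj π Phat init t x - traj π P init t x|) * Rmax := by
          rw [Finset.sum_mul]
      _ ≤ (2 * t * ε) * Rmax := mul_le_mul_of_nonneg_right (hl1 t) hRmax
      _ = Rmax * (2 * t * ε) := by ring
  calc |(∑ t ∈ Finset.range K, ∑ x : S × A, traj π Phat init t x * r x) -
        (∑ t ∈ Finset.range K, ∑ x : S × A, traj π P init t x * r x)|
      = |∑ t ∈ Finset.range K, ((∑ x : S × A, traj π Phat init t x * r x)
          - ∑ x : S × A, traj π P init t x * r x)| := by rw [Finset.sum_sub_distrib]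
    _ ≤ ∑ t ∈ Finset.range K, |(∑ x : S × A, traj π Phat init t x * r x)
          - ∑ x : S × A, traj π P init t x * r x| := Finset.abs_sum_le_sum_abs _ _
    _ ≤ ∑ t ∈ Finset.range K, Rmax * (2 * t * ε) :=
        Finset.sum_le_sum fun t _ => hterm t
    _ = (∑ t ∈ Finset.range K, (2 * (t:ℝ))) * (Rmax * ε) := by
        rw [Finset.sum_mul]
        exact Finset.sum_congr rfl fun t _ => by ring
    _ = ((K : ℝ) ^ 2 - K) * Rmax * ε := by rw [sum_range_two_mul]; ring
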